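/- arXiv:2605.17485 — 2 statements merged into one kernel-verified Lean document; each statement's English description precedes it below -/
import Mathlib

section
/- For every θ ∈ ℝ and every v ∈ ℝ²: min_{m ∈ ℝ²} Q( v⊙e_r(θ) + m⊙e_θ(θ) ) = ½ (v·e_r(θ))² / (C⁻¹)_{rrrr}(θ), and the minimum is attained exactly at m = ( 2(C⁻¹)_{rθrr}(θ) Σ − v·e_θ(θ) ) e_r(θ) + (C⁻¹)_{θθrr}(θ) Σ e_θ(θ), where Σ = (v·e_r(θ)) / (C⁻¹)_{rrrr}(θ). Moreover this minimum equals max_{Σ ∈ ℝ} ( Σ (v·e_r(θ)) − ½ Σ² (C⁻¹)_{rrrr}(θ) ). -/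
open Matrix MeasureTheory Set
open scoped ENNReal

noncomputable section

abbrev M2 := Matrix (Fin 2) (Fin 2) ℝ
abbrev V2 := Fin 2 → ℝ

def er (θ : ℝ) : V2 := ![Real.cos θ, Real.sin θ]

def et (θ : ℝ) : V2 := ![-Real.sin θ, Real.cos θ]

/-- Frobenius inner product `⟨A, B⟩ = tr(AᵀB)`. -/
def fip (A B : M2) : ℝ := ∑ i, ∑ j, A i j * B i j

def sym2 (A : M2) : M2 := (1 / 2 : ℝ) • (A + A.transpose)

/-- Symmetrized outer product `a ⊙ b`. -/
def odot (a b : V2) : M2 := (1 / 2 : ℝ) • (vecMulVec a b + vecMulVec b a)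

def IsSym (A : M2) : Prop := A.transpose = A

/-- The quadratic form `Q(F) = ½⟨sym F, C(sym F)⟩`. -/
def Qe (Cm : M2 →ₗ[ℝ] M2) (F : M2) : ℝ := (1 / 2) * fip (sym2 F) (Cm (sym2 F))

/-- `(C⁻¹)_{rrrr}(θ)`. -/
def cRRRR (Ci : M2 →ₗ[ℝ] M2) (θ : ℝ) : ℝ :=
  fip (vecMulVec (er θ) (er θ)) (Ci (vecMulVec (er θ) (er θ)))

/-- `(C⁻¹)_{rθrr}(θ)`. -/
def cRTRR (Ci : M2 →ₗ[ℝ] M2) (θ : ℝ) : ℝ :=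
  fip (odot (er θ) (et θ)) (Ci (vecMulVec (er θ) (er θ)))

/-- `(C⁻¹)_{θθrr}(θ)`. -/
def cTTRR (Ci : M2 →ₗ[ℝ] M2) (θ : ℝ) : ℝ :=
  fip (vecMulVec (et θ) (et θ)) (Ci (vecMulVec (er θ) (er θ)))

/-- The Flamant stiffness matrix `K_Fl`. -/
def KFl (α β : ℝ) (Ci : M2 →ₗ[ℝ] M2) : M2 :=
  Matrix.of fun i j => ∫ θ in Set.Ioo α β, er θ i * er θ j / cRRRR Ci θ

/-- The Flamant quadratic form `Q_Fl(u) = ½ u·K_Fl u`. -/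
def QFl (α β : ℝ) (Ci : M2 →ₗ[ℝ] M2) (u : V2) : ℝ := (1 / 2) * (u ⬝ᵥ (KFl α β Ci).mulVec u)

/-- The dual Flamant quadratic form `Q*_Fl(f) = ½ f·K_Fl⁻¹ f`. -/
def QstarFl (α β : ℝ) (Ci : M2 →ₗ[ℝ] M2) (f : V2) : ℝ :=
  (1 / 2) * (f ⬝ᵥ ((KFl α β Ci)⁻¹).mulVec f)

/-- The matrix `M(θ)` giving the optimal angular profile. -/
def Mmat (Ci : M2 →ₗ[ℝ] M2) (θ : ℝ) : M2 :=
  (2 * cRTRR Ci θ / cRRRR Ci θ) • vecMulVec (er θ) (er θ)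
    - vecMulVec (er θ) (et θ)
    + (cTTRR Ci θ / cRRRR Ci θ) • vecMulVec (et θ) (er θ)


namespace PRaux

def E1 (θ : ℝ) : M2 := vecMulVec (er θ) (er θ)
def E2 (θ : ℝ) : M2 := odot (er θ) (et θ)
def E3 (θ : ℝ) : M2 := vecMulVec (et θ) (et θ)

lemma fip_comm (A B : M2) : fip A B = fip B A := by
  unfold fip
  congr 1; funext i; congr 1; funext j; ring

lemma fip_add_left (A B C : M2) : fip (A + B) C = fip A C + fip B C := by
  simp [fip, Matrix.add_apply, add_mul, Finset.sum_add_distrib]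

lemma fip_smul_left (r : ℝ) (A C : M2) : fip (r • A) C = r * fip A C := by
  simp [fip, Matrix.smul_apply, smul_eq_mul, mul_assoc, Finset.mul_sum]
  ring

lemma fip_sub_left (A B C : M2) : fip (A - B) C = fip A C - fip B C := by
  simp [fip, Matrix.sub_apply, sub_mul, Finset.sum_sub_distrib]

lemma fip_add_right (A B C : M2) : fip A (B + C) = fip A B + fip A C := by
  rw [fip_comm, fip_add_left, fip_comm B, fip_comm C]

lemma fip_smul_right (r : ℝ) (A C : M2) : fip A (r • C) = r * fip A C := by
  rw [fip_comm, fip_smul_left, fip_comm]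

lemma fip_zero_left (C : M2) : fip 0 C = 0 := by simp [fip]

lemma fip_vmv (a b c d : V2) :
    fip (vecMulVec a b) (vecMulVec c d) = (a ⬝ᵥ c) * (b ⬝ᵥ d) := by
  simp [fip, vecMulVec, dotProduct, Fin.sum_univ_two]
  ring

lemma fip_odot_vmv (a b c d : V2) :
    fip (odot a b) (vecMulVec c d)
      = 1 / 2 * ((a ⬝ᵥ c) * (b ⬝ᵥ d) + (b ⬝ᵥ c) * (a ⬝ᵥ d)) := by
  rw [odot, fip_smul_left, fip_add_left, fip_vmv, fip_vmv]

lemma fip_odot_odot (a b c d : V2) :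
    fip (odot a b) (odot c d)
      = 1 / 2 * (1 / 2 * ((a ⬝ᵥ c) * (b ⬝ᵥ d) + (b ⬝ᵥ c) * (a ⬝ᵥ d))
          + 1 / 2 * ((a ⬝ᵥ d) * (b ⬝ᵥ c) + (b ⬝ᵥ d) * (a ⬝ᵥ c))) := by
  have h : odot c d = (1 / 2 : ℝ) • (vecMulVec c d + vecMulVec d c) := rfl
  rw [h, fip_smul_right, fip_add_right, fip_odot_vmv, fip_odot_vmv]

lemma er_dot_er (θ : ℝ) : er θ ⬝ᵥ er θ = 1 := by
  simp [er, dotProduct, Fin.sum_univ_two]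
  linear_combination Real.sin_sq_add_cos_sq θ

lemma er_dot_et (θ : ℝ) : er θ ⬝ᵥ et θ = 0 := by
  simp [er, et, dotProduct, Fin.sum_univ_two]
  ring

lemma et_dot_er (θ : ℝ) : et θ ⬝ᵥ er θ = 0 := by
  simp [er, et, dotProduct, Fin.sum_univ_two]
  ring

lemma et_dot_et (θ : ℝ) : et θ ⬝ᵥ et θ = 1 := by
  simp [er, et, dotProduct, Fin.sum_univ_two]
  linear_combination Real.sin_sq_add_cos_sq θ


lemma isSym_vmv (a : V2) : IsSym (vecMulVec a a) := by
  unfold IsSym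
  ext i j
  simp [vecMulVec, Matrix.transpose_apply, mul_comm]

lemma isSym_odot (a b : V2) : IsSym (odot a b) := by
  unfold IsSym odot
  ext i j
  simp [vecMulVec, Matrix.transpose_apply, Matrix.smul_apply, Matrix.add_apply]
  ring

lemma isSym_E1 (θ : ℝ) : IsSym (E1 θ) := isSym_vmv _
lemma isSym_E2 (θ : ℝ) : IsSym (E2 θ) := isSym_odot _ _
lemma isSym_E3 (θ : ℝ) : IsSym (E3 θ) := isSym_vmv _

lemma isSym_add {A B : M2} (hA : IsSym A) (hB : IsSym B) : IsSym (A + B) := by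
  unfold IsSym at *
  rw [Matrix.transpose_add, hA, hB]

lemma isSym_sub {A B : M2} (hA : IsSym A) (hB : IsSym B) : IsSym (A - B) := by
  unfold IsSym at *
  rw [Matrix.transpose_sub, hA, hB]

lemma isSym_smul {A : M2} (r : ℝ) (hA : IsSym A) : IsSym (r • A) := by
  unfold IsSym at *
  rw [Matrix.transpose_smul, hA]

lemma sym2_eq {A : M2} (hA : IsSym A) : sym2 A = A := by
  unfold _root_.sym2
  rw [hA]
  ext i j
  simp [Matrix.smul_apply, Matrix.add_apply]
  ring

/-- expansion of a vector in the orthonormal basis `er, et` -/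
lemma basis_expand (θ : ℝ) (w : V2) :
    (er θ ⬝ᵥ w) • er θ + (et θ ⬝ᵥ w) • et θ = w := by
  funext i
  fin_cases i <;>
    simp [er, et, dotProduct, Fin.sum_univ_two] <;>
    [linear_combination (w 0) * Real.sin_sq_add_cos_sq θ;
     linear_combination (w 1) * Real.sin_sq_add_cos_sq θ]

lemma odot_comm (a b : V2) : odot a b = odot b a := by
  unfold odot
  rw [add_comm]

lemma odot_add_left (a b c : V2) : odot (a + b) c = odot a c + odot b c := by
  unfold odot
  ext i j
  simp [vecMulVec, Matrix.smul_apply, Matrix.add_apply]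
  ring

lemma odot_smul_left (r : ℝ) (a c : V2) : odot (r • a) c = r • odot a c := by
  unfold odot
  ext i j
  simp [vecMulVec, Matrix.smul_apply, Matrix.add_apply]
  ring

lemma odot_er_er (θ : ℝ) : odot (er θ) (er θ) = E1 θ := by
  unfold odot E1
  ext i j
  simp [vecMulVec, Matrix.smul_apply, Matrix.add_apply]
  ring

lemma odot_et_et (θ : ℝ) : odot (et θ) (et θ) = E3 θ := by
  unfold odot E3
  ext i j
  simp [vecMulVec, Matrix.smul_apply, Matrix.add_apply]
  ring

lemma odot_add_right (a b c : V2) : odot c (a + b) = odot c a + odot c b := by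
  rw [odot_comm, odot_add_left, odot_comm a, odot_comm b]

lemma odot_smul_right (r : ℝ) (a c : V2) : odot c (r • a) = r • odot c a := by
  rw [odot_comm, odot_smul_left, odot_comm a]

lemma odot_decomp_r (θ : ℝ) (v : V2) :
    odot v (er θ) = (v ⬝ᵥ er θ) • E1 θ + (v ⬝ᵥ et θ) • E2 θ := by
  conv_lhs => rw [← basis_expand θ v]
  rw [odot_comm, odot_add_right, odot_smul_right, odot_smul_right, odot_er_er,
    dotProduct_comm (er θ) v, dotProduct_comm (et θ) v]
  rfl

lemma odot_decomp_t (θ : ℝ) (m : V2) :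
    odot m (et θ) = (m ⬝ᵥ er θ) • E2 θ + (m ⬝ᵥ et θ) • E3 θ := by
  conv_lhs => rw [← basis_expand θ m]
  rw [odot_comm, odot_add_right, odot_smul_right, odot_smul_right, odot_et_et,
    odot_comm (et θ) (er θ), dotProduct_comm (er θ) m, dotProduct_comm (et θ) m]
  rfl


lemma fip_E1_E1 (θ : ℝ) : fip (E1 θ) (E1 θ) = 1 := by
  simp only [E1, fip_vmv, er_dot_er]; norm_num
lemma fip_E2_E1 (θ : ℝ) : fip (E2 θ) (E1 θ) = 0 := by
  simp only [E1, E2, fip_odot_vmv, er_dot_er, er_dot_et, et_dot_er]; ring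
lemma fip_E3_E1 (θ : ℝ) : fip (E3 θ) (E1 θ) = 0 := by
  simp only [E1, E3, fip_vmv, et_dot_er]; ring
lemma fip_E1_E2 (θ : ℝ) : fip (E1 θ) (E2 θ) = 0 := by
  rw [fip_comm, fip_E2_E1]
lemma fip_E2_E2 (θ : ℝ) : fip (E2 θ) (E2 θ) = 1 / 2 := by
  simp only [E2, fip_odot_odot, er_dot_er, er_dot_et, et_dot_er, et_dot_et]
  norm_num
lemma fip_E3_E2 (θ : ℝ) : fip (E3 θ) (E2 θ) = 0 := by
  rw [fip_comm]
  simp only [E2, E3, fip_odot_vmv, er_dot_et, et_dot_er, et_dot_et]; ring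
lemma fip_E2_E3 (θ : ℝ) : fip (E2 θ) (E3 θ) = 0 := by
  rw [fip_comm, fip_E3_E2]
lemma fip_E1_E3 (θ : ℝ) : fip (E1 θ) (E3 θ) = 0 := by
  simp only [E1, E3, fip_vmv, er_dot_et]; ring
lemma fip_E3_E3 (θ : ℝ) : fip (E3 θ) (E3 θ) = 1 := by
  simp only [E3, fip_vmv, et_dot_et]; norm_num

lemma sym_expand (θ : ℝ) {S : M2} (hS : IsSym S) :
    S = fip S (E1 θ) • E1 θ + (2 * fip S (E2 θ)) • E2 θ + fip S (E3 θ) • E3 θ := by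
  have h10 : S 1 0 = S 0 1 := by
    simpa [Matrix.transpose_apply] using congrFun (congrFun hS 0) 1
  ext i j
  fin_cases i <;> fin_cases j <;>
    simp [fip, E1, E2, E3, odot, vecMulVec, er, et, Fin.sum_univ_two,
      Matrix.smul_apply, Matrix.add_apply, h10] <;>
    [linear_combination (-(S 0 0) * (Real.sin θ ^ 2 + Real.cos θ ^ 2 + 1)) * Real.sin_sq_add_cos_sq θ;
     linear_combination (-(S 0 1) * (Real.sin θ ^ 2 + Real.cos θ ^ 2 + 1)) * Real.sin_sq_add_cos_sq θ;
     linear_combination (-(S 0 1) * (Real.sin θ ^ 2 + Real.cos θ ^ 2 + 1)) * Real.sin_sq_add_cos_sq θ;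
     linear_combination (-(S 1 1) * (Real.sin θ ^ 2 + Real.cos θ ^ 2 + 1)) * Real.sin_sq_add_cos_sq θ]

end PRaux

open PRaux in
/-- Pointwise relaxation formula: for every `θ` and `v`,
`min_m Q(v⊙e_r + m⊙e_θ) = ½ (v·e_r)² / (C⁻¹)_{rrrr}`, attained exactly at the stated `m`,
and this minimum equals `max_Σ (Σ (v·e_r) − ½ Σ² (C⁻¹)_{rrrr})`. -/
theorem pointwise_relaxation (Cm Ci : M2 →ₗ[ℝ] M2)
    (hCsym : ∀ A, IsSym A → IsSym (Cm A))
    (hCsa : ∀ A B, IsSym A → IsSym B → fip (Cm A) B = fip A (Cm B))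
    (hCpos : ∀ A, IsSym A → A ≠ 0 → 0 < fip A (Cm A))
    (hIsym : ∀ A, IsSym A → IsSym (Ci A))
    (hInv1 : ∀ A, IsSym A → Ci (Cm A) = A)
    (hInv2 : ∀ A, IsSym A → Cm (Ci A) = A)
    (θ : ℝ) (v : V2) :
    (∀ m : V2, (1 / 2) * (v ⬝ᵥ er θ) ^ 2 / cRRRR Ci θ ≤
        Qe Cm (odot v (er θ) + odot m (et θ))) ∧
    (∀ m : V2, Qe Cm (odot v (er θ) + odot m (et θ)) =
        (1 / 2) * (v ⬝ᵥ er θ) ^ 2 / cRRRR Ci θ ↔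
      m = (2 * cRTRR Ci θ * ((v ⬝ᵥ er θ) / cRRRR Ci θ) - v ⬝ᵥ et θ) • er θ +
            (cTTRR Ci θ * ((v ⬝ᵥ er θ) / cRRRR Ci θ)) • et θ) ∧
    (∀ σ : ℝ, σ * (v ⬝ᵥ er θ) - (1 / 2) * σ ^ 2 * cRRRR Ci θ ≤
        (1 / 2) * (v ⬝ᵥ er θ) ^ 2 / cRRRR Ci θ) ∧
    (∃ σ : ℝ, σ * (v ⬝ᵥ er θ) - (1 / 2) * σ ^ 2 * cRRRR Ci θ =
        (1 / 2) * (v ⬝ᵥ er θ) ^ 2 / cRRRR Ci θ) := by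
  have hE1s := isSym_E1 θ
  have hCi1s : IsSym (Ci (E1 θ)) := hIsym _ hE1s
  set S := Ci (E1 θ) with hSdef
  set a := v ⬝ᵥ er θ with ha
  set q := v ⬝ᵥ et θ with hq
  set k := cRRRR Ci θ with hk
  set t := cRTRR Ci θ with ht
  set u := cTTRR Ci θ with hu
  have hkS : fip (E1 θ) S = k := by rw [hk]; rfl
  have htS : fip (E2 θ) S = t := by rw [ht]; rfl
  have huS : fip (E3 θ) S = u := by rw [hu]; rfl
  have hCmS : Cm S = E1 θ := hInv2 _ hE1s
  have hE1ne : E1 θ ≠ 0 := by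
    intro h
    have h1 := fip_E1_E1 θ
    rw [h, fip_zero_left] at h1
    norm_num at h1
  have hSne : S ≠ 0 := by
    intro h
    apply hE1ne
    rw [← hCmS, h, map_zero]
  have hkpos : 0 < k := by
    have h1 := hCpos S hCi1s hSne
    rw [hCmS] at h1
    have h2 : fip S (E1 θ) = k := (fip_comm S (E1 θ)).trans hkS
    linarith
  have hkne : k ≠ 0 := ne_of_gt hkpos
  have hak : a / k * k = a := div_mul_cancel₀ a hkne
  have hSexp : S = k • E1 θ + (2 * t) • E2 θ + u • E3 θ := by
    have h2 := sym_expand θ hCi1s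
    rw [fip_comm S (E1 θ), hkS, fip_comm S (E2 θ), htS, fip_comm S (E3 θ), huS] at h2
    exact h2
  -- key pointwise computation
  have key : ∀ m : V2, ∃ G : M2, IsSym G ∧
      Qe Cm (odot v (er θ) + odot m (et θ)) = 1 / 2 * a ^ 2 / k + 1 / 2 * fip G (Cm G) ∧
      (G = 0 ↔ m = (2 * t * (a / k) - q) • er θ + (u * (a / k)) • et θ) := by
    intro m
    set mr := m ⬝ᵥ er θ with hmr
    set mt := m ⬝ᵥ et θ with hmt
    set F : M2 := a • E1 θ + (q + mr) • E2 θ + mt • E3 θ with hFdef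
    have hF : odot v (er θ) + odot m (et θ) = F := by
      rw [hFdef, odot_decomp_r θ v, odot_decomp_t θ m, ← ha, ← hq, ← hmr, ← hmt]
      module
    have hFs : IsSym F := by
      rw [hFdef]
      exact isSym_add (isSym_add (isSym_smul _ (isSym_E1 θ)) (isSym_smul _ (isSym_E2 θ)))
        (isSym_smul _ (isSym_E3 θ))
    set G : M2 := F - (a / k) • S with hGdef
    have hGs : IsSym G := isSym_sub hFs (isSym_smul _ hCi1s)
    refine ⟨G, hGs, ?_, ?_⟩
    · -- the value computation
      have hQ : Qe Cm (odot v (er θ) + odot m (et θ)) = 1 / 2 * fip F (Cm F) := by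
        rw [hF]
        unfold Qe
        rw [sym2_eq hFs]
      have hFG : F = G + (a / k) • S := by rw [hGdef]; abel
      have hCmF : Cm F = Cm G + (a / k) • E1 θ := by rw [hFG, map_add, LinearMap.map_smul, hCmS]
      have hFE1 : fip F (E1 θ) = a := by
        rw [hFdef, fip_add_left, fip_add_left, fip_smul_left, fip_smul_left, fip_smul_left,
          fip_E1_E1, fip_E2_E1, fip_E3_E1]
        ring
      have hGE1 : fip G (E1 θ) = 0 := by
        rw [hGdef, fip_sub_left, hFE1, fip_smul_left, fip_comm S (E1 θ), hkS, hak, sub_self]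
      have hSCmG : fip S (Cm G) = 0 := by
        rw [← hCsa S G hCi1s hGs, hCmS, fip_comm, hGE1]
      rw [hQ, hCmF, hFG]
      simp only [fip_add_left, fip_add_right, fip_smul_left, fip_smul_right]
      rw [hGE1, hSCmG, fip_comm S (E1 θ), hkS]
      field_simp
      ring
    · -- the equality characterization
      have hGexp1 : G = (a - a / k * k) • E1 θ + ((q + mr) - a / k * (2 * t)) • E2 θ +
          (mt - a / k * u) • E3 θ := by
        rw [hGdef, hFdef, hSexp]
        module
      have hGexp : G = ((q + mr) - a / k * (2 * t)) • E2 θ + (mt - a / k * u) • E3 θ := by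
        rw [hGexp1, hak, sub_self, zero_smul, zero_add]
      constructor
      · intro hG0
        have h2 : fip G (E2 θ) = ((q + mr) - a / k * (2 * t)) * (1 / 2) := by
          rw [hGexp, fip_add_left, fip_smul_left, fip_smul_left, fip_E2_E2, fip_E3_E2]
          ring
        have h3 : fip G (E3 θ) = mt - a / k * u := by
          rw [hGexp, fip_add_left, fip_smul_left, fip_smul_left, fip_E2_E3, fip_E3_E3]
          ring
        rw [hG0, fip_zero_left] at h2 h3
        have hmr' : mr = 2 * t * (a / k) - q := by linarith
        have hmt' : mt = u * (a / k) := by linarith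
        have hm := basis_expand θ m
        rw [dotProduct_comm (er θ) m, dotProduct_comm (et θ) m, ← hmr, ← hmt] at hm
        rw [← hm, hmr', hmt']
      · intro hm
        have hmr' : mr = 2 * t * (a / k) - q := by
          rw [hmr, hm]
          simp only [add_dotProduct, smul_dotProduct, smul_eq_mul, er_dot_er, et_dot_er]
          ring
        have hmt' : mt = u * (a / k) := by
          rw [hmt, hm]
          simp only [add_dotProduct, smul_dotProduct, smul_eq_mul, er_dot_et, et_dot_et]
          ring
        rw [hGexp, hmr', hmt']
        have e2 : q + (2 * t * (a / k) - q) - a / k * (2 * t) = 0 := by ring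
        have e3 : u * (a / k) - a / k * u = 0 := by ring
        rw [e2, e3, zero_smul, zero_smul, add_zero]
  refine ⟨?_, ?_, ?_, ?_⟩
  · intro m
    obtain ⟨G, hGs, hval, -⟩ := key m
    rw [hval]
    have hnn : 0 ≤ fip G (Cm G) := by
      rcases eq_or_ne G 0 with h | h
      · rw [h, map_zero, fip_zero_left]
      · exact le_of_lt (hCpos G hGs h)
    linarith
  · intro m
    obtain ⟨G, hGs, hval, hiff⟩ := key m
    rw [hval, ← hiff]
    constructor
    · intro h
      by_contra hne
      have := hCpos G hGs hne
      linarith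
    · intro h
      rw [h, map_zero, fip_zero_left]
      ring
  · intro σ
    rw [← sub_nonneg]
    have heq : 1 / 2 * a ^ 2 / k - (σ * a - 1 / 2 * σ ^ 2 * k) = (a - σ * k) ^ 2 / (2 * k) := by
      field_simp
      ring
    rw [heq]
    exact div_nonneg (sq_nonneg _) (by linarith)
  · exact ⟨a / k, by field_simp; ring⟩
end
end

section
/- Let f₀ ∈ ℝ². For every continuously differentiable U : [−1, 0] → ℝ² and every measurable m : (−1, 0)×(α, β) → ℝ² with ∫∫ |m|² dρ dθ < ∞, one has ∫_{−1}^{0} ∫_α^β Q( U'(ρ)⊙e_r(θ) + m(ρ,θ)⊙e_θ(θ) ) dθ dρ − f₀·(U(0) − U(−1)) ≥ −Q*_Fl(f₀). Equality holds if and only if there is a constant c ∈ ℝ² such that U(ρ) = ρ K_Fl⁻¹ f₀ + c for all ρ ∈ [−1, 0] and m(ρ,θ) = M(θ) K_Fl⁻¹ f₀ for a.e. (ρ,θ). In particular, the infimum equals −Q*_Fl(f₀) and is attained. -/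
open Matrix MeasureTheory Set
open scoped ENNReal

noncomputable section

-- expansion lemmas
lemma fip_expand (A B : M2) : fip A B = A 0 0 * B 0 0 + A 0 1 * B 0 1 + A 1 0 * B 1 0 + A 1 1 * B 1 1 := by
  simp [fip, Fin.sum_univ_two]; ring

lemma dot_expand (a b : V2) : a ⬝ᵥ b = a 0 * b 0 + a 1 * b 1 := by
  simp [dotProduct, Fin.sum_univ_two]

@[simp] lemma vecMulVec_apply' (a b : V2) (i j : Fin 2) : vecMulVec a b i j = a i * b j := rfl

@[simp] lemma odot_apply (a b : V2) (i j : Fin 2) :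
    odot a b i j = (a i * b j + b i * a j) / 2 := by
  simp [odot]; ring

lemma fip_comm (A B : M2) : fip A B = fip B A := by simp [fip_expand]; ring

lemma fip_add_left (A B C : M2) : fip (A + B) C = fip A C + fip B C := by
  simp [fip_expand]; ring
lemma fip_add_right (A B C : M2) : fip A (B + C) = fip A B + fip A C := by
  simp [fip_expand]; ring
lemma fip_sub_left (A B C : M2) : fip (A - B) C = fip A C - fip B C := by
  simp [fip_expand]; ring
lemma fip_sub_right (A B C : M2) : fip A (B - C) = fip A B - fip A C := by
  simp [fip_expand]; ring
lemma fip_smul_left (r : ℝ) (A B : M2) : fip (r • A) B = r * fip A B := by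
  simp [fip_expand]; ring
lemma fip_smul_right (r : ℝ) (A B : M2) : fip A (r • B) = r * fip A B := by
  simp [fip_expand]; ring
lemma fip_self_nonneg (A : M2) : 0 ≤ fip A A := by
  rw [fip_expand]
  nlinarith [mul_self_nonneg (A 0 0), mul_self_nonneg (A 0 1), mul_self_nonneg (A 1 0), mul_self_nonneg (A 1 1)]

lemma isSym_vecMulVec (a : V2) : IsSym (vecMulVec a a) := by
  ext i j; simp [IsSym, Matrix.transpose_apply]; ring
lemma isSym_odot (a b : V2) : IsSym (odot a b) := by
  ext i j; simp [IsSym, Matrix.transpose_apply]; ring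
lemma IsSym.add {A B : M2} (hA : IsSym A) (hB : IsSym B) : IsSym (A + B) := by
  simp only [IsSym] at *; rw [Matrix.transpose_add, hA, hB]
lemma IsSym.sub {A B : M2} (hA : IsSym A) (hB : IsSym B) : IsSym (A - B) := by
  simp only [IsSym] at *; rw [Matrix.transpose_sub, hA, hB]
lemma IsSym.smul {A : M2} (r : ℝ) (hA : IsSym A) : IsSym (r • A) := by
  simp only [IsSym] at *; rw [Matrix.transpose_smul, hA]

lemma sym2_of_isSym {A : M2} (hA : IsSym A) : sym2 A = A := by
  unfold _root_.sym2; rw [show A.transpose = A from hA]; ext i j; simp; ring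

lemma fip_odot_vecMulVec (a b c d : V2) :
    fip (odot a b) (vecMulVec c d) = ((a ⬝ᵥ c) * (b ⬝ᵥ d) + (a ⬝ᵥ d) * (b ⬝ᵥ c)) / 2 := by
  simp [fip_expand, dot_expand]; ring

lemma fip_odot_odot (a b c d : V2) :
    fip (odot a b) (odot c d) = ((a ⬝ᵥ c) * (b ⬝ᵥ d) + (a ⬝ᵥ d) * (b ⬝ᵥ c)) / 2 := by
  simp [fip_expand, dot_expand]; ring

lemma fip_vecMulVec_vecMulVec (a b c d : V2) :
    fip (vecMulVec a b) (vecMulVec c d) = (a ⬝ᵥ c) * (b ⬝ᵥ d) := by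
  simp [fip_expand, dot_expand]; ring

@[simp] lemma er_apply0 (θ : ℝ) : er θ 0 = Real.cos θ := rfl
@[simp] lemma er_apply1 (θ : ℝ) : er θ 1 = Real.sin θ := rfl
@[simp] lemma et_apply0 (θ : ℝ) : et θ 0 = -Real.sin θ := rfl
@[simp] lemma et_apply1 (θ : ℝ) : et θ 1 = Real.cos θ := rfl

@[simp] lemma er_dot_er (θ : ℝ) : er θ ⬝ᵥ er θ = 1 := by
  simp [dot_expand]; rw [← Real.cos_sq_add_sin_sq θ]; ring
@[simp] lemma et_dot_et (θ : ℝ) : et θ ⬝ᵥ et θ = 1 := by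
  simp [dot_expand]; rw [← Real.cos_sq_add_sin_sq θ]; ring
@[simp] lemma er_dot_et (θ : ℝ) : er θ ⬝ᵥ et θ = 0 := by simp [dot_expand]; ring
@[simp] lemma et_dot_er (θ : ℝ) : et θ ⬝ᵥ er θ = 0 := by simp [dot_expand]; ring

lemma vec_decomp (θ : ℝ) (v : V2) : v = (v ⬝ᵥ er θ) • er θ + (v ⬝ᵥ et θ) • et θ := by
  have h := Real.cos_sq_add_sin_sq θ
  funext i; fin_cases i
  · simp [dot_expand]; linear_combination (-(v 0)) * h
  · simp [dot_expand]; linear_combination (-(v 1)) * h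
  
lemma mat_decomp (θ : ℝ) (A : M2) :
    A = fip A (vecMulVec (er θ) (er θ)) • vecMulVec (er θ) (er θ)
      + fip A (vecMulVec (er θ) (et θ)) • vecMulVec (er θ) (et θ)
      + fip A (vecMulVec (et θ) (er θ)) • vecMulVec (et θ) (er θ)
      + fip A (vecMulVec (et θ) (et θ)) • vecMulVec (et θ) (et θ) := by
  have h := Real.cos_sq_add_sin_sq θ
  ext i j; fin_cases i <;> fin_cases j <;> simp [fip_expand]
  · linear_combination (-(A 0 0) * (1 + Real.sin θ^2 + Real.cos θ^2)) * h
  · linear_combination (-(A 0 1) * (1 + Real.sin θ^2 + Real.cos θ^2)) * h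
  · linear_combination (-(A 1 0) * (1 + Real.sin θ^2 + Real.cos θ^2)) * h
  · linear_combination (-(A 1 1) * (1 + Real.sin θ^2 + Real.cos θ^2)) * h


section core
variable {Cm Ci : M2 →ₗ[ℝ] M2}
variable (hCsym : ∀ A, IsSym A → IsSym (Cm A))
    (hCsa : ∀ A B, IsSym A → IsSym B → fip (Cm A) B = fip A (Cm B))
    (hCpos : ∀ A, IsSym A → A ≠ 0 → 0 < fip A (Cm A))
    (hIsym : ∀ A, IsSym A → IsSym (Ci A))
    (hInv1 : ∀ A, IsSym A → Ci (Cm A) = A)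
    (hInv2 : ∀ A, IsSym A → Cm (Ci A) = A)

lemma vecMulVec_er_ne_zero (θ : ℝ) : vecMulVec (er θ) (er θ) ≠ 0 := by
  intro h
  have h1 : fip (vecMulVec (er θ) (er θ)) (vecMulVec (er θ) (er θ)) = 1 := by
    rw [fip_vecMulVec_vecMulVec, er_dot_er]; norm_num
  rw [h] at h1
  simp [fip_expand] at h1

include hCsa hCpos hIsym hInv2 in
lemma cRRRR_pos (θ : ℝ) : 0 < cRRRR Ci θ := by
  set A := vecMulVec (er θ) (er θ) with hAdef
  have hAsym : IsSym A := isSym_vecMulVec _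
  have hBsym : IsSym (Ci A) := hIsym A hAsym
  have hCmB : Cm (Ci A) = A := hInv2 A hAsym
  have hBne : Ci A ≠ 0 := by
    intro h
    have hA0 : A = 0 := by rw [← hCmB, h, map_zero]
    exact vecMulVec_er_ne_zero θ (hAdef ▸ hA0)
  have := hCpos (Ci A) hBsym hBne
  calc (0:ℝ) < fip (Ci A) (Cm (Ci A)) := this
  _ = cRRRR Ci θ := by rw [hCmB, cRRRR, fip_comm]

include hCsa hIsym hInv2 in
/-- The completion-of-squares identity. -/
lemma quad_identity {S Sg : M2} (hS : IsSym S) (hSg : IsSym Sg) :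
    (1/2) * fip S (Cm S) =
      (1/2) * fip (S - Ci Sg) (Cm (S - Ci Sg)) + fip S Sg - (1/2) * fip Sg (Ci Sg) := by
  have h1 : Cm (S - Ci Sg) = Cm S - Sg := by rw [map_sub, hInv2 _ hSg]
  have h2 : fip (Ci Sg) (Cm S) = fip S Sg := by
    rw [← hCsa _ _ (hIsym _ hSg) hS, hInv2 _ hSg, fip_comm]
  rw [h1, fip_sub_left, fip_sub_right, fip_sub_right, h2]
  have h3 : fip (Ci Sg) Sg = fip Sg (Ci Sg) := fip_comm _ _
  rw [h3]; ring

lemma IsSym.offdiag {S : M2} (hS : IsSym S) : S 1 0 = S 0 1 := by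
  conv_lhs => rw [← hS]
  rfl

lemma fip_vecMulVec_isSym {S : M2} (hS : IsSym S) (a b : V2) :
    fip (vecMulVec a b) S = fip (vecMulVec b a) S := by
  simp [fip_expand, hS.offdiag]; ring

include hIsym in
lemma Ci_rr_decomp (θ : ℝ) :
    Ci (vecMulVec (er θ) (er θ)) =
      cRRRR Ci θ • vecMulVec (er θ) (er θ)
      + cRTRR Ci θ • (vecMulVec (er θ) (et θ) + vecMulVec (et θ) (er θ))
      + cTTRR Ci θ • vecMulVec (et θ) (et θ) := by
  set S := Ci (vecMulVec (er θ) (er θ)) with hSdef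
  have hS : IsSym S := hIsym _ (isSym_vecMulVec _)
  have hrr : fip S (vecMulVec (er θ) (er θ)) = cRRRR Ci θ := fip_comm _ _
  have htt : fip S (vecMulVec (et θ) (et θ)) = cTTRR Ci θ := fip_comm _ _
  have hret : fip S (vecMulVec (er θ) (et θ)) = cRTRR Ci θ := by
    rw [fip_comm, fip_vecMulVec_isSym hS, cRTRR]
    have : odot (er θ) (et θ) = (1/2 : ℝ) • (vecMulVec (er θ) (et θ) + vecMulVec (et θ) (er θ)) := rfl
    rw [this, fip_smul_left, fip_add_left]
    rw [show fip (vecMulVec (er θ) (et θ)) S = fip (vecMulVec (et θ) (er θ)) S from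
      fip_vecMulVec_isSym hS _ _]
    ring
  have hter : fip S (vecMulVec (et θ) (er θ)) = cRTRR Ci θ := by
    rw [fip_comm, ← fip_vecMulVec_isSym hS, fip_comm, hret]
  calc S = fip S (vecMulVec (er θ) (er θ)) • vecMulVec (er θ) (er θ)
      + fip S (vecMulVec (er θ) (et θ)) • vecMulVec (er θ) (et θ)
      + fip S (vecMulVec (et θ) (er θ)) • vecMulVec (et θ) (er θ)
      + fip S (vecMulVec (et θ) (et θ)) • vecMulVec (et θ) (et θ) := mat_decomp θ S
  _ = _ := by rw [hrr, htt, hret, hter]; module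

lemma vecMulVec_mulVec' (a b v : V2) : (vecMulVec a b).mulVec v = (b ⬝ᵥ v) • a := by
  funext i; simp [Matrix.mulVec, dotProduct, Fin.sum_univ_two]; ring

lemma Mmat_mulVec (θ : ℝ) (w : V2) :
    (Mmat Ci θ).mulVec w =
      (2 * cRTRR Ci θ / cRRRR Ci θ * (er θ ⬝ᵥ w) - (et θ ⬝ᵥ w)) • er θ
      + (cTTRR Ci θ / cRRRR Ci θ * (er θ ⬝ᵥ w)) • et θ := by
  rw [Mmat, Matrix.add_mulVec, Matrix.sub_mulVec]
  rw [Matrix.smul_mulVec, Matrix.smul_mulVec, vecMulVec_mulVec',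
    vecMulVec_mulVec', vecMulVec_mulVec']
  funext i; simp [Pi.smul_apply, smul_eq_mul]; ring

lemma odot_self (a : V2) : odot a a = vecMulVec a a := by
  ext i j; simp [odot]; ring

lemma odot_comm (a b : V2) : odot a b = odot b a := by
  ext i j; simp [odot]; ring

lemma odot_add_left (a b c : V2) : odot (a + b) c = odot a c + odot b c := by
  ext i j; simp [odot]; ring

lemma odot_smul_left (r : ℝ) (a b : V2) : odot (r • a) b = r • odot a b := by
  ext i j; simp [odot]; ring

include hIsym in
/-- Pointwise identity: the optimal profile. -/
lemma pointwise_identity (θ : ℝ) (w : V2) (hc : cRRRR Ci θ ≠ 0) :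
    odot w (er θ) + odot ((Mmat Ci θ).mulVec w) (et θ)
      = Ci (((w ⬝ᵥ er θ) / cRRRR Ci θ) • vecMulVec (er θ) (er θ)) := by
  rw [_root_.map_smul, Ci_rr_decomp hIsym θ]
  have hw : w = (w ⬝ᵥ er θ) • er θ + (w ⬝ᵥ et θ) • et θ := vec_decomp θ w
  have hd1 : er θ ⬝ᵥ w = w ⬝ᵥ er θ := dotProduct_comm _ _
  have hd2 : et θ ⬝ᵥ w = w ⬝ᵥ et θ := dotProduct_comm _ _
  have hodot : odot w (er θ) = (w ⬝ᵥ er θ) • vecMulVec (er θ) (er θ)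
      + (w ⬝ᵥ et θ) • odot (et θ) (er θ) := by
    conv_lhs => rw [hw]
    rw [odot_add_left, odot_smul_left, odot_smul_left, odot_self]
  rw [Mmat_mulVec, hd1, hd2, hodot, odot_add_left, odot_smul_left, odot_smul_left, odot_self]
  have h1 : odot (et θ) (er θ) = (1/2 : ℝ) • (vecMulVec (et θ) (er θ) + vecMulVec (er θ) (et θ)) := rfl
  have h2 : odot (er θ) (et θ) = (1/2 : ℝ) • (vecMulVec (er θ) (et θ) + vecMulVec (et θ) (er θ)) := rfl
  rw [h1, h2]
  match_scalars <;> field_simp <;> ring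

end core

lemma cs2 (a b : V2) : (a ⬝ᵥ b)^2 ≤ (a ⬝ᵥ a) * (b ⬝ᵥ b) := by
  simp only [dot_expand]
  nlinarith [sq_nonneg (a 0 * b 1 - a 1 * b 0)]

lemma fip_cs (A B : M2) : (fip A B)^2 ≤ fip A A * fip B B := by
  simp only [fip_expand]
  nlinarith [sq_nonneg (A 0 0 * B 0 1 - A 0 1 * B 0 0), sq_nonneg (A 0 0 * B 1 0 - A 1 0 * B 0 0),
    sq_nonneg (A 0 0 * B 1 1 - A 1 1 * B 0 0), sq_nonneg (A 0 1 * B 1 0 - A 1 0 * B 0 1),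
    sq_nonneg (A 0 1 * B 1 1 - A 1 1 * B 0 1), sq_nonneg (A 1 0 * B 1 1 - A 1 1 * B 1 0)]

lemma abs_fip_le (A B : M2) : |fip A B| ≤ Real.sqrt (fip A A) * Real.sqrt (fip B B) := by
  rw [← Real.sqrt_mul_self (abs_nonneg (fip A B)), ← Real.sqrt_mul (fip_self_nonneg A)]
  apply Real.sqrt_le_sqrt
  calc |fip A B| * |fip A B| = (fip A B)^2 := by rw [← abs_mul, ← sq, abs_sq]
  _ ≤ fip A A * fip B B := fip_cs A B

lemma abs_entry_le (A : M2) (i j : Fin 2) : |A i j| ≤ Real.sqrt (fip A A) := by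
  rw [← Real.sqrt_mul_self (abs_nonneg (A i j))]
  apply Real.sqrt_le_sqrt
  rw [← abs_mul, ← sq, abs_sq, fip_expand]
  fin_cases i <;> fin_cases j <;> simp <;>
    nlinarith [sq_nonneg (A 0 0), sq_nonneg (A 0 1), sq_nonneg (A 1 0), sq_nonneg (A 1 1)]

lemma mat_basis (A : M2) :
    A = A 0 0 • Matrix.single 0 0 (1:ℝ) + A 0 1 • Matrix.single 0 1 (1:ℝ)
      + A 1 0 • Matrix.single 1 0 (1:ℝ) + A 1 1 • Matrix.single 1 1 (1:ℝ) := by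
  ext i j; fin_cases i <;> fin_cases j <;> simp [Matrix.single]

/-- Operator bound for a linear map w.r.t. the Frobenius quadratic form. -/
lemma exists_opBound (T : M2 →ₗ[ℝ] M2) : ∃ L : ℝ, 0 ≤ L ∧ ∀ A, |fip A (T A)| ≤ L * fip A A := by
  set g : M2 → ℝ := fun B => Real.sqrt (fip (T B) (T B)) with hg
  refine ⟨g (Matrix.single 0 0 1) + g (Matrix.single 0 1 1) + g (Matrix.single 1 0 1)
    + g (Matrix.single 1 1 1), by positivity, fun A => ?_⟩
  have hTA : T A = A 0 0 • T (Matrix.single 0 0 1) + A 0 1 • T (Matrix.single 0 1 1)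
      + A 1 0 • T (Matrix.single 1 0 1) + A 1 1 • T (Matrix.single 1 1 1) := by
    conv_lhs => rw [mat_basis A]
    rw [map_add, map_add, map_add, _root_.map_smul, _root_.map_smul, _root_.map_smul,
      _root_.map_smul]
  rw [hTA, fip_add_right, fip_add_right, fip_add_right, fip_smul_right, fip_smul_right,
    fip_smul_right, fip_smul_right]
  have key : ∀ (i j : Fin 2) (B : M2), |A i j * fip A (T B)| ≤ g B * fip A A := by
    intro i j B
    rw [abs_mul]
    calc |A i j| * |fip A (T B)| ≤ Real.sqrt (fip A A) * (Real.sqrt (fip A A) * Real.sqrt (fip (T B) (T B))) := by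
          apply mul_le_mul (abs_entry_le A i j) (abs_fip_le A (T B)) (abs_nonneg _) (Real.sqrt_nonneg _)
    _ = g B * (Real.sqrt (fip A A) * Real.sqrt (fip A A)) := by ring
    _ = g B * fip A A := by rw [Real.mul_self_sqrt (fip_self_nonneg A)]
  calc |A 0 0 * fip A (T (Matrix.single 0 0 1)) + A 0 1 * fip A (T (Matrix.single 0 1 1))
      + A 1 0 * fip A (T (Matrix.single 1 0 1)) + A 1 1 * fip A (T (Matrix.single 1 1 1))|
      ≤ |A 0 0 * fip A (T (Matrix.single 0 0 1))| + |A 0 1 * fip A (T (Matrix.single 0 1 1))|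
      + |A 1 0 * fip A (T (Matrix.single 1 0 1))| + |A 1 1 * fip A (T (Matrix.single 1 1 1))| := by
        apply (abs_add_le _ _).trans; gcongr ?_ + _; apply (abs_add_le _ _).trans; gcongr ?_ + _; exact abs_add_le _ _
  _ ≤ g (Matrix.single 0 0 1) * fip A A + g (Matrix.single 0 1 1) * fip A A
      + g (Matrix.single 1 0 1) * fip A A + g (Matrix.single 1 1 1) * fip A A := by
        gcongr <;> exact key _ _ _
  _ = _ := by ring

lemma dot_self_nonneg (a : V2) : 0 ≤ a ⬝ᵥ a := by
  rw [dot_expand]; nlinarith [mul_self_nonneg (a 0), mul_self_nonneg (a 1)]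

/-- Bound on the Frobenius square of `u ⊙ e_r + m ⊙ e_θ`. -/
lemma fipFF_bound (θ : ℝ) (u m : V2) :
    fip (odot u (er θ) + odot m (et θ)) (odot u (er θ) + odot m (et θ))
      ≤ 2 * (u ⬝ᵥ u) + 2 * (m ⬝ᵥ m) := by
  rw [fip_add_left, fip_add_right, fip_add_right, fip_odot_odot, fip_odot_odot, fip_odot_odot,
    fip_odot_odot]
  have h1 : er θ ⬝ᵥ er θ = 1 := er_dot_er θ
  have h2 : et θ ⬝ᵥ et θ = 1 := et_dot_et θ
  have h3 : er θ ⬝ᵥ et θ = 0 := er_dot_et θ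
  have h4 : et θ ⬝ᵥ er θ = 0 := et_dot_er θ
  have hc1 := cs2 u (er θ)
  have hc2 := cs2 u (et θ)
  have hc3 := cs2 m (er θ)
  have hc4 := cs2 m (et θ)
  have hmu : m ⬝ᵥ u = u ⬝ᵥ m := dotProduct_comm _ _
  have hue : u ⬝ᵥ er θ = er θ ⬝ᵥ u := dotProduct_comm _ _
  have hut : u ⬝ᵥ et θ = et θ ⬝ᵥ u := dotProduct_comm _ _
  have hme : m ⬝ᵥ er θ = er θ ⬝ᵥ m := dotProduct_comm _ _
  have hmt : m ⬝ᵥ et θ = et θ ⬝ᵥ m := dotProduct_comm _ _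
  rw [h1, h2, h3, h4] at *
  rw [← hue, ← hut, ← hme, ← hmt, hmu]
  nlinarith [sq_nonneg (u ⬝ᵥ et θ - m ⬝ᵥ er θ), sq_nonneg (u ⬝ᵥ et θ + m ⬝ᵥ er θ),
    dot_self_nonneg u, dot_self_nonneg m]

lemma odot_et_inj (θ : ℝ) {a b : V2} (h : odot a (et θ) = odot b (et θ)) : a = b := by
  have h1 : a ⬝ᵥ et θ = b ⬝ᵥ et θ := by
    have := congrArg (fun X => fip X (vecMulVec (et θ) (et θ))) h
    simp only [fip_odot_vecMulVec, et_dot_et, mul_one] at this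
    linarith
  have h2 : a ⬝ᵥ er θ = b ⬝ᵥ er θ := by
    have := congrArg (fun X => fip X (odot (er θ) (et θ))) h
    simp only [fip_odot_odot, er_dot_et, et_dot_er, et_dot_et] at this
    linarith
  rw [vec_decomp θ a, vec_decomp θ b, h1, h2]


/-- Entrywise linearization of a linear map on `M2`. -/
lemma lin_entry (T : M2 →ₗ[ℝ] M2) (X : M2) (i j : Fin 2) :
    T X i j = X 0 0 * T (Matrix.single 0 0 1) i j + X 0 1 * T (Matrix.single 0 1 1) i j
      + X 1 0 * T (Matrix.single 1 0 1) i j + X 1 1 * T (Matrix.single 1 1 1) i j := by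
  conv_lhs => rw [mat_basis X]
  rw [map_add, map_add, map_add, _root_.map_smul, _root_.map_smul, _root_.map_smul,
    _root_.map_smul]
  simp [Matrix.add_apply, Matrix.smul_apply, smul_eq_mul]

@[simp] lemma sym2_apply (A : M2) (i j : Fin 2) : sym2 A i j = (A i j + A j i) / 2 := by
  simp [_root_.sym2]; ring

@[fun_prop] lemma continuous_er (i : Fin 2) : Continuous fun θ => er θ i := by
  fin_cases i
  · simpa using Real.continuous_cos
  · simpa using Real.continuous_sin

@[fun_prop] lemma continuous_et (i : Fin 2) : Continuous fun θ => et θ i := by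
  fin_cases i
  · exact (Real.continuous_sin.neg : Continuous fun θ => -Real.sin θ)
  · simpa using Real.continuous_cos

lemma continuous_Ci_rr_entry (Ci : M2 →ₗ[ℝ] M2) (i j : Fin 2) :
    Continuous fun θ => Ci (vecMulVec (er θ) (er θ)) i j := by
  have h : ∀ θ, Ci (vecMulVec (er θ) (er θ)) i j =
      (er θ 0 * er θ 0) * Ci (Matrix.single 0 0 1) i j
      + (er θ 0 * er θ 1) * Ci (Matrix.single 0 1 1) i j
      + (er θ 1 * er θ 0) * Ci (Matrix.single 1 0 1) i j
      + (er θ 1 * er θ 1) * Ci (Matrix.single 1 1 1) i j := fun θ => by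
    rw [lin_entry Ci]; simp only [vecMulVec_apply']
  simp only [h]; fun_prop

@[fun_prop] lemma continuous_cRRRR (Ci : M2 →ₗ[ℝ] M2) : Continuous (cRRRR Ci) := by
  unfold cRRRR
  simp only [fip_expand, vecMulVec_apply']
  exact ((((((continuous_er 0).mul (continuous_er 0)).mul (continuous_Ci_rr_entry Ci 0 0)).add (((continuous_er 0).mul (continuous_er 1)).mul (continuous_Ci_rr_entry Ci 0 1))).add (((continuous_er 1).mul (continuous_er 0)).mul (continuous_Ci_rr_entry Ci 1 0))).add (((continuous_er 1).mul (continuous_er 1)).mul (continuous_Ci_rr_entry Ci 1 1)))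

@[fun_prop] lemma continuous_cRTRR (Ci : M2 →ₗ[ℝ] M2) : Continuous (cRTRR Ci) := by
  unfold cRTRR
  simp only [fip_expand, vecMulVec_apply', odot_apply]
  exact (((((((((continuous_er 0).mul (continuous_et 0)).add ((continuous_et 0).mul (continuous_er 0)))).div_const 2).mul (continuous_Ci_rr_entry Ci 0 0)).add ((((((continuous_er 0).mul (continuous_et 1)).add ((continuous_et 0).mul (continuous_er 1)))).div_const 2).mul (continuous_Ci_rr_entry Ci 0 1))).add ((((((continuous_er 1).mul (continuous_et 0)).add ((continuous_et 1).mul (continuous_er 0)))).div_const 2).mul (continuous_Ci_rr_entry Ci 1 0))).add ((((((continuous_er 1).mul (continuous_et 1)).add ((continuous_et 1).mul (continuous_er 1)))).div_const 2).mul (continuous_Ci_rr_entry Ci 1 1)))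

@[fun_prop] lemma continuous_cTTRR (Ci : M2 →ₗ[ℝ] M2) : Continuous (cTTRR Ci) := by
  unfold cTTRR
  simp only [fip_expand, vecMulVec_apply', odot_apply]
  exact ((((((continuous_et 0).mul (continuous_et 0)).mul (continuous_Ci_rr_entry Ci 0 0)).add (((continuous_et 0).mul (continuous_et 1)).mul (continuous_Ci_rr_entry Ci 0 1))).add (((continuous_et 1).mul (continuous_et 0)).mul (continuous_Ci_rr_entry Ci 1 0))).add (((continuous_et 1).mul (continuous_et 1)).mul (continuous_Ci_rr_entry Ci 1 1)))

/-- A continuous function vanishing a.e. on an open interval vanishes on it. -/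
lemma eq_zero_of_ae_zero {f : ℝ → ℝ} {a b : ℝ} (hf : ContinuousOn f (Ioo a b))
    (h : ∀ᵐ x ∂(volume.restrict (Ioo a b)), f x = 0) : ∀ x ∈ Ioo a b, f x = 0 := by
  intro x hx
  by_contra hfx
  have hcont : ContinuousWithinAt f (Ioo a b) x := hf x hx
  have hopen : IsOpen (Ioo a b) := isOpen_Ioo
  have hnhds : {y | f y ≠ 0} ∩ Ioo a b ∈ nhdsWithin x (Ioo a b) := by
    have hpre : f ⁻¹' ({0}ᶜ) ∈ nhdsWithin x (Ioo a b) :=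
      hcont.preimage_mem_nhdsWithin (isOpen_compl_singleton.mem_nhds hfx)
    have heq : f ⁻¹' ({0}ᶜ) = {y | f y ≠ 0} := by ext y; simp
    rw [heq] at hpre
    exact Filter.inter_mem hpre self_mem_nhdsWithin
  rw [hopen.nhdsWithin_eq hx] at hnhds
  obtain ⟨ε, hε, hball⟩ := Metric.mem_nhds_iff.mp hnhds
  have hnull : volume ({y | f y ≠ 0} ∩ Ioo a b) = 0 := by
    have := (ae_restrict_iff' measurableSet_Ioo).mp h
    rw [Filter.eventually_iff, mem_ae_iff] at this
    refine measure_mono_null ?_ this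
    intro y hy
    simp only [mem_compl_iff, mem_setOf_eq]
    intro hcon
    exact hy.1 (hcon hy.2)
  have hsub : Metric.ball x ε ⊆ {y | f y ≠ 0} ∩ Ioo a b := hball
  have : volume (Metric.ball x ε) = 0 := measure_mono_null hsub hnull
  have hpos : 0 < volume (Metric.ball x ε) := Metric.measure_ball_pos volume x hε
  exact absurd this hpos.ne'

/-- Nondegeneracy: a vector orthogonal to `e_r(θ)` for all `θ` in a nontrivial interval is `0`. -/
lemma eq_zero_of_dot_er {α β : ℝ} (hαβ : α < β) {v : V2}
    (h : ∀ θ ∈ Ioo α β, v ⬝ᵥ er θ = 0) : v = 0 := by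
  set d : ℝ := min ((β - α)/3) 1 with hd
  have hd0 : 0 < d := lt_min (by linarith) one_pos
  have hd1 : d ≤ 1 := min_le_right _ _
  have hθ₀ : α + d ∈ Ioo α β := by
    constructor
    · linarith
    · have : d ≤ (β - α)/3 := min_le_left _ _
      linarith
  have hθ₁ : α + 2*d ∈ Ioo α β := by
    constructor
    · linarith
    · have : d ≤ (β - α)/3 := min_le_left _ _
      linarith
  have h0 := h _ hθ₀
  have h1 := h _ hθ₁
  rw [dot_expand] at h0 h1
  simp only [er_apply0, er_apply1] at h0 h1
  have hsin : Real.sin d ≠ 0 := by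
    have : (0:ℝ) < Real.sin d := Real.sin_pos_of_pos_of_lt_pi hd0 (by
      have := Real.pi_gt_three; linarith)
    exact this.ne'
  have key0 : v 0 * Real.sin d = 0 := by
    have e : v 0 * Real.sin d =
        (v 0 * Real.cos (α + d) + v 1 * Real.sin (α + d)) * Real.sin (α + 2*d)
        - (v 0 * Real.cos (α + 2*d) + v 1 * Real.sin (α + 2*d)) * Real.sin (α + d) := by
      have hs : Real.sin d = Real.sin ((α + 2*d) - (α + d)) := by ring_nf
      rw [hs, Real.sin_sub]; ring
    rw [e, h0, h1]; ring
  have key1 : v 1 * Real.sin d = 0 := by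
    have e : v 1 * Real.sin d =
        (v 0 * Real.cos (α + 2*d) + v 1 * Real.sin (α + 2*d)) * Real.cos (α + d)
        - (v 0 * Real.cos (α + d) + v 1 * Real.sin (α + d)) * Real.cos (α + 2*d) := by
      have hs : Real.sin d = Real.sin ((α + 2*d) - (α + d)) := by ring_nf
      rw [hs, Real.sin_sub]; ring
    rw [e, h0, h1]; ring
  have hv0 : v 0 = 0 := by
    rcases mul_eq_zero.mp key0 with h' | h'
    · exact h'
    · exact absurd h' hsin
  have hv1 : v 1 = 0 := by
    rcases mul_eq_zero.mp key1 with h' | h'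
    · exact h'
    · exact absurd h' hsin
  funext i; fin_cases i <;> simpa [hv0, hv1]

section Kfacts
variable {Cm Ci : M2 →ₗ[ℝ] M2} {α β : ℝ}
variable (hαβ : α < β)
    (hCsa : ∀ A B, IsSym A → IsSym B → fip (Cm A) B = fip A (Cm B))
    (hCpos : ∀ A, IsSym A → A ≠ 0 → 0 < fip A (Cm A))
    (hIsym : ∀ A, IsSym A → IsSym (Ci A))
    (hInv2 : ∀ A, IsSym A → Cm (Ci A) = A)

lemma cont_integrableOn {f : ℝ → ℝ} (hf : Continuous f) (a b : ℝ) :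
    IntegrableOn f (Ioo a b) volume :=
  (hf.integrableOn_Icc).mono_set Ioo_subset_Icc_self

include hCsa hCpos hIsym hInv2

lemma hc_ne (θ : ℝ) : cRRRR Ci θ ≠ 0 := (cRRRR_pos hCsa hCpos hIsym hInv2 θ).ne'

lemma continuous_sigv (v : V2) : Continuous fun θ => (v ⬝ᵥ er θ) / cRRRR Ci θ := by
  apply Continuous.div _ (continuous_cRRRR Ci) (hc_ne hCsa hCpos hIsym hInv2)
  simp only [dot_expand]; fun_prop

lemma continuous_Kintegrand (i j : Fin 2) :
    Continuous fun θ => er θ i * er θ j / cRRRR Ci θ :=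
  Continuous.div (by fun_prop) (continuous_cRRRR Ci) (hc_ne hCsa hCpos hIsym hInv2)

lemma K_mulVec_eq (v : V2) (i : Fin 2) :
    (KFl α β Ci).mulVec v i = ∫ θ in Ioo α β, er θ i * (v ⬝ᵥ er θ) / cRRRR Ci θ := by
  have hint : ∀ j : Fin 2, IntegrableOn (fun θ => er θ i * er θ j / cRRRR Ci θ) (Ioo α β) volume :=
    fun j => cont_integrableOn (continuous_Kintegrand hCsa hCpos hIsym hInv2 i j) α β
  have heq : ∀ θ, er θ i * (v ⬝ᵥ er θ) / cRRRR Ci θ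
      = v 0 * (er θ i * er θ 0 / cRRRR Ci θ) + v 1 * (er θ i * er θ 1 / cRRRR Ci θ) := by
    intro θ; rw [dot_expand]; ring
  simp only [heq]
  rw [integral_add ((hint 0).const_mul _) ((hint 1).const_mul _), integral_const_mul,
    integral_const_mul]
  have : (KFl α β Ci).mulVec v i = KFl α β Ci i 0 * v 0 + KFl α β Ci i 1 * v 1 := by
    simp [Matrix.mulVec, dot_expand]
  rw [this]
  simp only [KFl, Matrix.of_apply]
  ring

lemma K_quad (v : V2) :
    v ⬝ᵥ (KFl α β Ci).mulVec v = ∫ θ in Ioo α β, (v ⬝ᵥ er θ)^2 / cRRRR Ci θ := by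
  have hint : ∀ i : Fin 2, IntegrableOn (fun θ => er θ i * (v ⬝ᵥ er θ) / cRRRR Ci θ) (Ioo α β) volume := by
    intro i
    apply cont_integrableOn _ α β
    apply Continuous.div _ (continuous_cRRRR Ci) (hc_ne hCsa hCpos hIsym hInv2)
    simp only [dot_expand]; fun_prop
  rw [dot_expand, K_mulVec_eq hCsa hCpos hIsym hInv2 v 0, K_mulVec_eq hCsa hCpos hIsym hInv2 v 1]
  rw [← integral_const_mul, ← integral_const_mul,
    ← integral_add (((hint 0)).const_mul _) ((hint 1).const_mul _)]
  apply setIntegral_congr_fun measurableSet_Ioo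
  intro θ _
  simp only [dot_expand]; ring

lemma K_pd (hab : α < β) (v : V2) (hv : v ≠ 0) : 0 < v ⬝ᵥ (KFl α β Ci).mulVec v := by
  rw [K_quad hCsa hCpos hIsym hInv2]
  have hpos : ∀ θ, 0 ≤ (v ⬝ᵥ er θ)^2 / cRRRR Ci θ := fun θ =>
    div_nonneg (sq_nonneg _) (cRRRR_pos hCsa hCpos hIsym hInv2 θ).le
  have hnn : 0 ≤ ∫ θ in Ioo α β, (v ⬝ᵥ er θ)^2 / cRRRR Ci θ :=
    integral_nonneg hpos
  rcases hnn.lt_or_eq with h | h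
  · exact h
  exfalso
  have hcont : Continuous fun θ => (v ⬝ᵥ er θ)^2 / cRRRR Ci θ := by
    apply Continuous.div _ (continuous_cRRRR Ci) (hc_ne hCsa hCpos hIsym hInv2)
    simp only [dot_expand]; fun_prop
  have hint := cont_integrableOn hcont α β
  have hzero := (integral_eq_zero_iff_of_nonneg_ae
    (Filter.Eventually.of_forall hpos) hint).mp h.symm
  have hallz := eq_zero_of_ae_zero hcont.continuousOn hzero
  apply hv
  apply eq_zero_of_dot_er hab
  intro θ hθ
  have h1 := hallz θ hθ
  have hc := hc_ne hCsa hCpos hIsym hInv2 (Ci := Ci) θ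
  field_simp at h1
  rw [dot_expand]
  simpa using h1

include hαβ in
lemma K_det_ne : (KFl α β Ci).det ≠ 0 := by
  intro hdet
  obtain ⟨v, hv, hKv⟩ := (Matrix.exists_mulVec_eq_zero_iff).mpr hdet
  have := K_pd hCsa hCpos hIsym hInv2 hαβ v hv
  rw [hKv] at this
  rw [dotProduct_zero] at this
  exact lt_irrefl 0 this

include hαβ in
lemma K_inv_mulVec (f₀ : V2) :
    (KFl α β Ci).mulVec ((KFl α β Ci)⁻¹.mulVec f₀) = f₀ := by
  rw [Matrix.mulVec_mulVec, Matrix.mul_nonsing_inv _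
    (isUnit_iff_ne_zero.mpr (K_det_ne hαβ hCsa hCpos hIsym hInv2)), Matrix.one_mulVec]

end Kfacts

section chunk6
variable {Cm Ci : M2 →ₗ[ℝ] M2}

lemma fip_F_Sg (θ : ℝ) (u mv : V2) (s : ℝ) :
    fip (odot u (er θ) + odot mv (et θ)) (s • vecMulVec (er θ) (er θ)) = s * (u ⬝ᵥ er θ) := by
  rw [fip_smul_right, fip_add_left, fip_odot_vecMulVec, fip_odot_vecMulVec,
    er_dot_er, et_dot_er]
  ring

lemma fip_F_rr (θ : ℝ) (u mv : V2) :
    fip (odot u (er θ) + odot mv (et θ)) (vecMulVec (er θ) (er θ)) = u ⬝ᵥ er θ := by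
  rw [fip_add_left, fip_odot_vecMulVec, fip_odot_vecMulVec, er_dot_er, et_dot_er]
  ring

lemma fip_smul_Ci (A : M2) (s : ℝ) :
    fip (s • A) (Ci (s • A)) = s^2 * fip A (Ci A) := by
  rw [_root_.map_smul, fip_smul_left, fip_smul_right]; ring

lemma fip_Ci_Sg_rr (θ : ℝ) (s : ℝ) :
    fip (Ci (s • vecMulVec (er θ) (er θ))) (vecMulVec (er θ) (er θ)) = s * cRRRR Ci θ := by
  rw [_root_.map_smul, fip_smul_left, fip_comm]; rfl

lemma isSym_F (θ : ℝ) (u mv : V2) : IsSym (odot u (er θ) + odot mv (et θ)) :=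
  (isSym_odot _ _).add (isSym_odot _ _)

lemma fip_zero_right (A : M2) : fip A 0 = 0 := by simp [fip_expand]

lemma fip_zero_left (A : M2) : fip 0 A = 0 := by simp [fip_expand]

variable (hCpos : ∀ A, IsSym A → A ≠ 0 → 0 < fip A (Cm A))

include hCpos in
lemma fip_Cm_nonneg {A : M2} (hA : IsSym A) : 0 ≤ fip A (Cm A) := by
  by_cases h : A = 0
  · subst h; rw [map_zero, fip_zero_right]
  · exact (hCpos A hA h).le

include hCpos in
lemma eq_zero_of_fip_Cm {A : M2} (hA : IsSym A) (h : fip A (Cm A) = 0) : A = 0 := by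
  by_contra hne
  exact absurd h (hCpos A hA hne).ne'

/-- FTC on `Ioo a b` for a function with one-sided derivatives on `Icc a b`. -/
lemma ftc_Ioo {U U' : ℝ → V2} {a b : ℝ} (hab : a ≤ b)
    (hU : ∀ ρ ∈ Icc a b, HasDerivWithinAt U (U' ρ) (Icc a b) ρ)
    (hU' : ContinuousOn U' (Icc a b)) (i : Fin 2) :
    ∫ ρ in Ioo a b, U' ρ i = U b i - U a i := by
  have hcomp : ∀ ρ ∈ Icc a b, HasDerivWithinAt (fun x => U x i) (U' ρ i) (Icc a b) ρ :=
    fun ρ hρ => hasDerivWithinAt_pi.mp (hU ρ hρ) i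
  have hconti : ContinuousOn (fun x => U x i) (Icc a b) :=
    fun ρ hρ => ((hcomp ρ hρ).continuousWithinAt)
  have hU'i : ContinuousOn (fun ρ => U' ρ i) (Icc a b) :=
    (continuous_apply i).comp_continuousOn hU'
  have key : ∫ x in a..b, U' x i = U b i - U a i := by
    apply intervalIntegral.integral_eq_sub_of_hasDeriv_right_of_le hab hconti
    · intro x hx
      have h1 : HasDerivAt (fun x => U x i) (U' x i) x :=
        (hcomp x (Ioo_subset_Icc_self hx)).hasDerivAt (Icc_mem_nhds hx.1 hx.2)
      exact h1.hasDerivWithinAt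
    · exact (hU'i.mono (by rw [uIcc_of_le hab])).intervalIntegrable
  rw [intervalIntegral.integral_of_le hab, integral_Ioc_eq_integral_Ioo] at key
  exact key

end chunk6


set_option maxHeartbeats 1000000 in
/-- The limiting force problem: for admissible `(U, m)`, the total energy
`∫∫ Q(U'⊙e_r + m⊙e_θ) − f₀·(U(0) − U(−1))` is at least `−Q*_Fl(f₀)`, with equality iff
`U(ρ) = ρ K_Fl⁻¹ f₀ + c` for some constant `c` and `m = M(θ) K_Fl⁻¹ f₀` a.e. -/
theorem limiting_force_problem (α β : ℝ) (hαβ : α < β) (h2π : β - α < 2 * Real.pi)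
    (Cm Ci : M2 →ₗ[ℝ] M2)
    (hCsym : ∀ A, IsSym A → IsSym (Cm A))
    (hCsa : ∀ A B, IsSym A → IsSym B → fip (Cm A) B = fip A (Cm B))
    (hCpos : ∀ A, IsSym A → A ≠ 0 → 0 < fip A (Cm A))
    (hIsym : ∀ A, IsSym A → IsSym (Ci A))
    (hInv1 : ∀ A, IsSym A → Ci (Cm A) = A)
    (hInv2 : ∀ A, IsSym A → Cm (Ci A) = A)
    (f₀ : V2) (U U' : ℝ → V2)
    (hU : ∀ ρ ∈ Set.Icc (-1 : ℝ) 0, HasDerivWithinAt U (U' ρ) (Set.Icc (-1 : ℝ) 0) ρ)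
    (hU' : ContinuousOn U' (Set.Icc (-1 : ℝ) 0))
    (m : ℝ × ℝ → V2) (hm : Measurable m)
    (hmL2 : (∫⁻ q in (Set.Ioo (-1 : ℝ) 0) ×ˢ (Set.Ioo α β),
        ENNReal.ofReal (∑ i, m q i ^ 2)) ≠ ⊤) :
    -(QstarFl α β Ci f₀) ≤
      (∫ q in (Set.Ioo (-1 : ℝ) 0) ×ˢ (Set.Ioo α β),
        Qe Cm (odot (U' q.1) (er q.2) + odot (m q) (et q.2))) -
        f₀ ⬝ᵥ (U 0 - U (-1)) ∧
    ((∫ q in (Set.Ioo (-1 : ℝ) 0) ×ˢ (Set.Ioo α β),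
        Qe Cm (odot (U' q.1) (er q.2) + odot (m q) (et q.2))) -
        f₀ ⬝ᵥ (U 0 - U (-1)) = -(QstarFl α β Ci f₀) ↔
      (∃ c : V2, ∀ ρ ∈ Set.Icc (-1 : ℝ) 0,
          U ρ = ρ • ((KFl α β Ci)⁻¹.mulVec f₀) + c) ∧
        ∀ᵐ q ∂(volume.restrict ((Set.Ioo (-1 : ℝ) 0) ×ˢ (Set.Ioo α β))),
          m q = (Mmat Ci q.2).mulVec ((KFl α β Ci)⁻¹.mulVec f₀)) := by
  set w : V2 := (KFl α β Ci)⁻¹.mulVec f₀ with hwdef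
  set μ1 := volume.restrict (Ioo (-1:ℝ) 0) with hμ1
  set μ2 := volume.restrict (Ioo α β) with hμ2
  have hZm : MeasurableSet ((Ioo (-1:ℝ) 0) ×ˢ (Ioo α β)) :=
    measurableSet_Ioo.prod measurableSet_Ioo
  have hmeasrw : (volume : Measure (ℝ×ℝ)).restrict ((Ioo (-1:ℝ) 0) ×ˢ (Ioo α β)) = μ1.prod μ2 := by
    rw [Measure.volume_eq_prod, ← Measure.prod_restrict]
  haveI : IsFiniteMeasure μ1 := ⟨by rw [hμ1, Measure.restrict_apply_univ]; exact measure_Ioo_lt_top⟩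
  haveI : IsFiniteMeasure μ2 := ⟨by rw [hμ2, Measure.restrict_apply_univ]; exact measure_Ioo_lt_top⟩
  have hcpos : ∀ θ, 0 < cRRRR Ci θ := cRRRR_pos hCsa hCpos hIsym hInv2
  have hcne : ∀ θ, cRRRR Ci θ ≠ 0 := fun θ => (hcpos θ).ne'
  have hKwf : (KFl α β Ci).mulVec w = f₀ := K_inv_mulVec hαβ hCsa hCpos hIsym hInv2 f₀
  set sg : ℝ → ℝ := fun θ => (w ⬝ᵥ er θ) / cRRRR Ci θ with hsg
  set QF : ℝ × ℝ → ℝ := fun q => Qe Cm (odot (U' q.1) (er q.2) + odot (m q) (et q.2)) with hQF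
  set G : ℝ × ℝ → ℝ := fun q => sg q.2 * (U' q.1 ⬝ᵥ er q.2) with hG
  set Hh : ℝ × ℝ → ℝ := fun q => (1/2) * (sg q.2^2 * cRRRR Ci q.2) with hHh
  set Dm : ℝ × ℝ → M2 := fun q => (odot (U' q.1) (er q.2) + odot (m q) (et q.2))
    - Ci (sg q.2 • vecMulVec (er q.2) (er q.2)) with hDm
  set g : ℝ × ℝ → ℝ := fun q => (1/2) * fip (Dm q) (Cm (Dm q)) with hg
  have hDsym : ∀ q, IsSym (Dm q) := fun q =>
    (isSym_F _ _ _).sub (hIsym _ ((isSym_vecMulVec _).smul _))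
  -- pointwise identity
  have hQFeq : ∀ q, QF q = g q + G q - Hh q := by
    intro q
    have hSsym : IsSym (odot (U' q.1) (er q.2) + odot (m q) (et q.2)) := isSym_F _ _ _
    have hSgsym : IsSym (sg q.2 • vecMulVec (er q.2) (er q.2)) := (isSym_vecMulVec _).smul _
    have h1 : QF q = (1/2) * fip (odot (U' q.1) (er q.2) + odot (m q) (et q.2))
        (Cm (odot (U' q.1) (er q.2) + odot (m q) (et q.2))) := by
      rw [hQF]; simp only [Qe, sym2_of_isSym hSsym]
    have h2 := quad_identity hCsa hIsym hInv2 hSsym hSgsym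
    have h3 : fip (odot (U' q.1) (er q.2) + odot (m q) (et q.2))
        (sg q.2 • vecMulVec (er q.2) (er q.2)) = G q := by
      rw [fip_F_Sg, hG, hsg]
    have h4 : fip (sg q.2 • vecMulVec (er q.2) (er q.2))
        (Ci (sg q.2 • vecMulVec (er q.2) (er q.2))) = sg q.2^2 * cRRRR Ci q.2 := by
      rw [fip_smul_Ci]; rfl
    rw [h1, h2, h3, h4, hg, hHh, hDm]
  have hgnn : ∀ q, 0 ≤ g q := by
    intro q
    rw [hg]
    have := fip_Cm_nonneg hCpos (hDsym q)
    linarith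
  -- integrability
  have hZae : ∀ᵐ q ∂(μ1.prod μ2), q ∈ (Ioo (-1:ℝ) 0) ×ˢ (Ioo α β) := by
    rw [← hmeasrw]; exact ae_restrict_mem hZm
  have hclmem : ∀ ρ : ℝ, max (-1) (min ρ 0) ∈ Icc (-1:ℝ) 0 :=
    fun ρ => ⟨le_max_left _ _, max_le (by norm_num) (min_le_right _ _)⟩
  set VU : ℝ → V2 := fun ρ => U' (max (-1) (min ρ 0)) with hVUdef
  have hVUcont : Continuous VU := by
    exact hU'.comp_continuous (f := fun ρ => max (-1) (min ρ 0)) (by fun_prop) hclmem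
  have hVUeq : ∀ ρ ∈ Icc (-1:ℝ) 0, VU ρ = U' ρ := by
    intro ρ hρ
    rw [hVUdef]
    simp only
    rw [min_eq_left hρ.2, max_eq_right hρ.1]
  have hmes_m : ∀ i, Measurable fun q : ℝ×ℝ => m q i := fun i => (measurable_pi_apply i).comp hm
  have hmes_VU : ∀ i, Measurable fun q : ℝ×ℝ => VU q.1 i :=
    fun i => (((continuous_apply i).comp hVUcont).measurable).comp measurable_fst
  have hmes_er : ∀ i, Measurable fun q : ℝ×ℝ => er q.2 i :=
    fun i => ((continuous_er i).measurable).comp measurable_snd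
  have hmes_et : ∀ i, Measurable fun q : ℝ×ℝ => et q.2 i :=
    fun i => ((continuous_et i).measurable).comp measurable_snd
  set F' : ℝ×ℝ → M2 := fun q => odot (VU q.1) (er q.2) + odot (m q) (et q.2) with hF'def
  have hmes_F' : ∀ i j, Measurable fun q => F' q i j := by
    intro i j
    simp only [hF'def, Matrix.add_apply, odot_apply]
    exact ((((hmes_VU i).mul (hmes_er j)).add ((hmes_er i).mul (hmes_VU j))).div_const 2).add
      ((((hmes_m i).mul (hmes_et j)).add ((hmes_et i).mul (hmes_m j))).div_const 2)
  have hmes_S : ∀ i j, Measurable fun q => sym2 (F' q) i j := by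
    intro i j
    simp only [sym2_apply]
    exact ((hmes_F' i j).add (hmes_F' j i)).div_const 2
  have hmes_CS : ∀ i j, Measurable fun q => Cm (sym2 (F' q)) i j := by
    intro i j
    have hrw : (fun q => Cm (sym2 (F' q)) i j) = fun q =>
        sym2 (F' q) 0 0 * Cm (Matrix.single 0 0 1) i j
        + sym2 (F' q) 0 1 * Cm (Matrix.single 0 1 1) i j
        + sym2 (F' q) 1 0 * Cm (Matrix.single 1 0 1) i j
        + sym2 (F' q) 1 1 * Cm (Matrix.single 1 1 1) i j := funext fun q => lin_entry Cm _ i j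
    rw [hrw]
    exact ((((hmes_S 0 0).mul_const _).add ((hmes_S 0 1).mul_const _)).add
      ((hmes_S 1 0).mul_const _)).add ((hmes_S 1 1).mul_const _)
  have hmes_QF' : Measurable fun q => Qe Cm (F' q) := by
    have hrw : (fun q => Qe Cm (F' q)) = fun q => (1/2) *
        (sym2 (F' q) 0 0 * Cm (sym2 (F' q)) 0 0 + sym2 (F' q) 0 1 * Cm (sym2 (F' q)) 0 1
        + sym2 (F' q) 1 0 * Cm (sym2 (F' q)) 1 0 + sym2 (F' q) 1 1 * Cm (sym2 (F' q)) 1 1) :=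
      funext fun q => by rw [Qe, fip_expand]
    rw [hrw]
    exact (((((hmes_S 0 0).mul (hmes_CS 0 0)).add ((hmes_S 0 1).mul (hmes_CS 0 1))).add
      ((hmes_S 1 0).mul (hmes_CS 1 0))).add ((hmes_S 1 1).mul (hmes_CS 1 1))).const_mul _
  have hQFae : (fun q => Qe Cm (F' q)) =ᶠ[ae (μ1.prod μ2)] QF := by
    filter_upwards [hZae] with q hq
    rw [hQF]; simp only [hF'def]
    rw [hVUeq q.1 (Ioo_subset_Icc_self hq.1)]
  have hQFaesm : AEStronglyMeasurable QF (μ1.prod μ2) :=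
    hmes_QF'.aestronglyMeasurable.congr hQFae
  obtain ⟨L, hL0, hLb⟩ := exists_opBound Cm
  have hUUcont : ContinuousOn (fun ρ => U' ρ ⬝ᵥ U' ρ) (Icc (-1:ℝ) 0) := by
    simp only [dot_expand]
    exact (((continuous_apply 0).comp_continuousOn hU').mul
      ((continuous_apply 0).comp_continuousOn hU')).add
      (((continuous_apply 1).comp_continuousOn hU').mul
      ((continuous_apply 1).comp_continuousOn hU'))
  obtain ⟨Bu, hBu⟩ := isCompact_Icc.exists_bound_of_continuousOn hUUcont
  have hBu' : ∀ ρ ∈ Icc (-1:ℝ) 0, U' ρ ⬝ᵥ U' ρ ≤ Bu := fun ρ hρ =>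
    (le_abs_self _).trans (by rw [← Real.norm_eq_abs]; exact hBu ρ hρ)
  have hBu0 : (0:ℝ) ≤ Bu := le_trans (dot_self_nonneg _) (hBu' 0 ⟨by norm_num, le_refl 0⟩)
  have hmsq : Integrable (fun q => ∑ i, m q i ^ 2) (μ1.prod μ2) := by
    constructor
    · have hrw : (fun q : ℝ×ℝ => ∑ i, m q i ^ 2) = fun q => m q 0 ^ 2 + m q 1 ^ 2 :=
        funext fun q => Fin.sum_univ_two _
      rw [hrw]
      exact (((hmes_m 0).pow_const 2).add ((hmes_m 1).pow_const 2)).aestronglyMeasurable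
    · rw [hasFiniteIntegral_iff_ofReal (Filter.Eventually.of_forall fun q => by positivity),
        ← hmeasrw]
      exact lt_top_iff_ne_top.mpr hmL2
  have hQFbound : ∀ᵐ q ∂(μ1.prod μ2), ‖QF q‖ ≤ L * Bu + L * (∑ i, m q i ^ 2) := by
    filter_upwards [hZae] with q hq
    have hSsym := isSym_F q.2 (U' q.1) (m q)
    have hQFval : QF q = (1/2) * fip (odot (U' q.1) (er q.2) + odot (m q) (et q.2))
        (Cm (odot (U' q.1) (er q.2) + odot (m q) (et q.2))) := by
      rw [hQF]; simp only [Qe, sym2_of_isSym hSsym]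
    rw [hQFval, Real.norm_eq_abs, abs_mul]
    have h6 := hLb (odot (U' q.1) (er q.2) + odot (m q) (et q.2))
    have h2 := fipFF_bound q.2 (U' q.1) (m q)
    have h3 : U' q.1 ⬝ᵥ U' q.1 ≤ Bu := hBu' _ (Ioo_subset_Icc_self hq.1)
    have h4 : m q ⬝ᵥ m q = ∑ i, m q i ^ 2 := by
      rw [dot_expand, Fin.sum_univ_two]; ring
    have habs : |(1:ℝ)/2| = 1/2 := by norm_num
    rw [habs]
    have h7 := mul_le_mul_of_nonneg_left h2 hL0
    have h8 := mul_le_mul_of_nonneg_left h3 hL0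
    rw [h4] at h7
    nlinarith [h6, h7, h8]
  have hIQF : Integrable QF (μ1.prod μ2) := by
    apply Integrable.mono' ((integrable_const (L * Bu)).add (hmsq.const_mul L)) hQFaesm
    filter_upwards [hQFbound] with q hq
    simpa using hq
  have hsgcont : Continuous sg := by
    rw [hsg]; exact continuous_sigv hCsa hCpos hIsym hInv2 w
  have hdot_mes : Measurable fun q : ℝ×ℝ => VU q.1 ⬝ᵥ er q.2 := by
    simp only [dot_expand]
    exact ((hmes_VU 0).mul (hmes_er 0)).add ((hmes_VU 1).mul (hmes_er 1))
  have hGaesm : AEStronglyMeasurable G (μ1.prod μ2) := by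
    apply AEStronglyMeasurable.congr
      (f := fun q : ℝ×ℝ => sg q.2 * (VU q.1 ⬝ᵥ er q.2))
    · exact (((hsgcont.measurable).comp measurable_snd).mul hdot_mes).aestronglyMeasurable
    · filter_upwards [hZae] with q hq
      rw [hG]; simp only
      rw [hVUeq q.1 (Ioo_subset_Icc_self hq.1)]
  obtain ⟨Bs, hBs⟩ := isCompact_Icc.exists_bound_of_continuousOn
    (hsgcont.continuousOn (s := Icc α β))
  have hBs0 : 0 ≤ Bs := le_trans (norm_nonneg _) (hBs α ⟨le_refl α, hαβ.le⟩)
  have hGbound : ∀ᵐ q ∂(μ1.prod μ2), ‖G q‖ ≤ Bs * Real.sqrt Bu := by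
    filter_upwards [hZae] with q hq
    rw [hG]; simp only [Real.norm_eq_abs, abs_mul]
    have h1 : |sg q.2| ≤ Bs := by
      rw [← Real.norm_eq_abs]; exact hBs q.2 (Ioo_subset_Icc_self hq.2)
    have h2 : |U' q.1 ⬝ᵥ er q.2| ≤ Real.sqrt Bu := by
      rw [← Real.sqrt_sq_eq_abs]
      apply Real.sqrt_le_sqrt
      calc (U' q.1 ⬝ᵥ er q.2)^2 ≤ (U' q.1 ⬝ᵥ U' q.1) * (er q.2 ⬝ᵥ er q.2) := cs2 _ _
      _ = U' q.1 ⬝ᵥ U' q.1 := by rw [er_dot_er, mul_one]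
      _ ≤ Bu := hBu' _ (Ioo_subset_Icc_self hq.1)
    exact mul_le_mul h1 h2 (abs_nonneg _) hBs0
  have hIG : Integrable G (μ1.prod μ2) := Integrable.mono' (integrable_const _) hGaesm hGbound
  have hHcont : Continuous fun θ => (1/2) * (sg θ^2 * cRRRR Ci θ) :=
    continuous_const.mul ((hsgcont.pow 2).mul (continuous_cRRRR Ci))
  have hIH : Integrable Hh (μ1.prod μ2) := by
    have haesm : AEStronglyMeasurable Hh (μ1.prod μ2) :=
      ((hHcont.measurable).comp measurable_snd).aestronglyMeasurable
    obtain ⟨BH, hBH⟩ := isCompact_Icc.exists_bound_of_continuousOn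
      (hHcont.continuousOn (s := Icc α β))
    apply Integrable.mono' (integrable_const BH) haesm
    filter_upwards [hZae] with q hq
    exact hBH q.2 (Ioo_subset_Icc_self hq.2)
  have hIg : Integrable g (μ1.prod μ2) := by
    have hrw : g = fun q => QF q - G q + Hh q := funext fun q => by rw [hQFeq q]; ring
    rw [hrw]; exact (hIQF.sub hIG).add hIH
  -- integral computations
  have hJ1 : ∫ q, G q ∂(μ1.prod μ2) = f₀ ⬝ᵥ (U 0 - U (-1)) := by
    have hsplit : ∫ q, G q ∂(μ1.prod μ2)
        = ∫ q, ((fun ρ => U' ρ 0) q.1 * (fun θ => sg θ * er θ 0) q.2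
          + (fun ρ => U' ρ 1) q.1 * (fun θ => sg θ * er θ 1) q.2) ∂(μ1.prod μ2) := by
      apply integral_congr_ae (Filter.Eventually.of_forall fun q => ?_)
      rw [hG]; simp only [dot_expand]; ring
    have hint1 : ∀ i : Fin 2, IntegrableOn (fun ρ => U' ρ i) (Ioo (-1:ℝ) 0) volume :=
      fun i => (((continuous_apply i).comp_continuousOn hU').integrableOn_Icc).mono_set
        Ioo_subset_Icc_self
    have hint2 : ∀ i : Fin 2, IntegrableOn (fun θ => sg θ * er θ i) (Ioo α β) volume :=
      fun i => cont_integrableOn (hsgcont.mul (continuous_er i)) α β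
    have hprod : ∀ i : Fin 2,
        Integrable (fun q : ℝ×ℝ => U' q.1 i * (sg q.2 * er q.2 i)) (μ1.prod μ2) := by
      intro i
      rw [hμ1, hμ2]
      exact Integrable.mul_prod (hint1 i) (hint2 i)
    have ha : ∫ q, ((fun ρ => U' ρ 0) q.1 * (fun θ => sg θ * er θ 0) q.2
          + (fun ρ => U' ρ 1) q.1 * (fun θ => sg θ * er θ 1) q.2) ∂(μ1.prod μ2)
        = (∫ q, ((fun ρ => U' ρ 0) q.1 * (fun θ => sg θ * er θ 0) q.2) ∂(μ1.prod μ2))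
          + ∫ q, ((fun ρ => U' ρ 1) q.1 * (fun θ => sg θ * er θ 1) q.2) ∂(μ1.prod μ2) :=
      integral_add (hprod 0) (hprod 1)
    have hb0 : ∫ q, ((fun ρ => U' ρ 0) q.1 * (fun θ => sg θ * er θ 0) q.2) ∂(μ1.prod μ2)
        = (∫ ρ, U' ρ 0 ∂μ1) * ∫ θ, sg θ * er θ 0 ∂μ2 :=
      integral_prod_mul (μ := μ1) (ν := μ2) (fun ρ => U' ρ 0) (fun θ => sg θ * er θ 0)
    have hb1 : ∫ q, ((fun ρ => U' ρ 1) q.1 * (fun θ => sg θ * er θ 1) q.2) ∂(μ1.prod μ2)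
        = (∫ ρ, U' ρ 1 ∂μ1) * ∫ θ, sg θ * er θ 1 ∂μ2 :=
      integral_prod_mul (μ := μ1) (ν := μ2) (fun ρ => U' ρ 1) (fun θ => sg θ * er θ 1)
    have hFT : ∀ i : Fin 2, (∫ ρ, U' ρ i ∂μ1) = U 0 i - U (-1) i := fun i => by
      rw [hμ1]; exact ftc_Ioo (by norm_num) hU hU' i
    have hKi : ∀ i : Fin 2, (∫ θ, sg θ * er θ i ∂μ2) = f₀ i := by
      intro i
      have h1 : ∀ θ, sg θ * er θ i = er θ i * (w ⬝ᵥ er θ) / cRRRR Ci θ := fun θ => by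
        rw [hsg]; ring
      rw [hμ2]
      calc ∫ θ in Ioo α β, sg θ * er θ i
          = ∫ θ in Ioo α β, er θ i * (w ⬝ᵥ er θ) / cRRRR Ci θ :=
            integral_congr_ae (Filter.Eventually.of_forall fun θ => h1 θ)
      _ = (KFl α β Ci).mulVec w i := (K_mulVec_eq hCsa hCpos hIsym hInv2 w i).symm
      _ = f₀ i := by rw [hKwf]
    rw [hsplit, ha, hb0, hb1, hFT 0, hFT 1, hKi 0, hKi 1]
    rw [dot_expand]
    simp only [Pi.sub_apply]
    ring
  have hJ2 : ∫ q, Hh q ∂(μ1.prod μ2) = QstarFl α β Ci f₀ := by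
    have hsplit : ∫ q, Hh q ∂(μ1.prod μ2)
        = ∫ q, ((fun _ : ℝ => (1:ℝ)) q.1
            * (fun θ => (1/2) * (sg θ^2 * cRRRR Ci θ)) q.2) ∂(μ1.prod μ2) := by
      apply integral_congr_ae (Filter.Eventually.of_forall fun q => ?_)
      rw [hHh]; simp only [one_mul]
    rw [hsplit,
      integral_prod_mul (μ := μ1) (ν := μ2) (fun _ : ℝ => (1:ℝ))
        (fun θ => (1/2) * (sg θ^2 * cRRRR Ci θ))]
    have h1 : (∫ _ : ℝ, (1:ℝ) ∂μ1) = 1 := by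
      rw [integral_const, hμ1, measureReal_restrict_apply_univ, Real.volume_real_Ioo]
      norm_num
    have h2 : (∫ θ, (1/2) * (sg θ^2 * cRRRR Ci θ) ∂μ2)
        = (1/2) * (w ⬝ᵥ (KFl α β Ci).mulVec w) := by
      rw [integral_const_mul]
      congr 1
      rw [hμ2, K_quad hCsa hCpos hIsym hInv2 w]
      apply integral_congr_ae (Filter.Eventually.of_forall fun θ => ?_)
      rw [hsg]
      field_simp
    rw [h1, h2, hKwf, one_mul]
    simp only [QstarFl]
    rw [← hwdef, dotProduct_comm]
  have hmaster : ∫ q, QF q ∂(μ1.prod μ2)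
      = (∫ q, g q ∂(μ1.prod μ2)) + f₀ ⬝ᵥ (U 0 - U (-1)) - QstarFl α β Ci f₀ := by
    have h0 : ∫ q, QF q ∂(μ1.prod μ2) = ∫ q, (g q + G q - Hh q) ∂(μ1.prod μ2) :=
      integral_congr_ae (Filter.Eventually.of_forall hQFeq)
    have ha : ∫ q, (g q + G q - Hh q) ∂(μ1.prod μ2)
        = (∫ q, (g q + G q) ∂(μ1.prod μ2)) - ∫ q, Hh q ∂(μ1.prod μ2) :=
      integral_sub (hIg.add hIG) hIH
    have hb : ∫ q, (g q + G q) ∂(μ1.prod μ2)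
        = (∫ q, g q ∂(μ1.prod μ2)) + ∫ q, G q ∂(μ1.prod μ2) := integral_add hIg hIG
    rw [h0, ha, hb, hJ1, hJ2]
  -- characterization
  have hchar_fwd : g =ᵐ[μ1.prod μ2] 0 →
      (∃ c : V2, ∀ ρ ∈ Set.Icc (-1 : ℝ) 0, U ρ = ρ • w + c) ∧
        ∀ᵐ q ∂(μ1.prod μ2), m q = (Mmat Ci q.2).mulVec w := by
    intro hg0
    have hD0 : ∀ᵐ q ∂(μ1.prod μ2), Dm q = 0 := by
      filter_upwards [hg0] with q hq
      apply eq_zero_of_fip_Cm hCpos (hDsym q)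
      have hq' : (1/2:ℝ) * fip (Dm q) (Cm (Dm q)) = 0 := by
        have h := hq; rw [hg] at h; simpa using h
      linarith
    have hdot0 : ∀ᵐ q ∂(μ1.prod μ2), (U' q.1 - w) ⬝ᵥ er q.2 = 0 := by
      filter_upwards [hD0] with q hq
      have hFq : odot (U' q.1) (er q.2) + odot (m q) (et q.2)
          = Ci (sg q.2 • vecMulVec (er q.2) (er q.2)) := by
        have h := hq; rw [hDm] at h; simp only at h; exact sub_eq_zero.mp h
      have h1 : fip (odot (U' q.1) (er q.2) + odot (m q) (et q.2))
          (vecMulVec (er q.2) (er q.2)) = U' q.1 ⬝ᵥ er q.2 := fip_F_rr _ _ _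
      have h2 : fip (Ci (sg q.2 • vecMulVec (er q.2) (er q.2)))
          (vecMulVec (er q.2) (er q.2)) = sg q.2 * cRRRR Ci q.2 := fip_Ci_Sg_rr _ _
      have h3 : sg q.2 * cRRRR Ci q.2 = w ⬝ᵥ er q.2 := by
        rw [hsg]; exact div_mul_cancel₀ _ (hcne q.2)
      rw [sub_dotProduct, ← h1, hFq, h2, h3]
      exact sub_self _
    have hU'w : ∀ ρ ∈ Ioo (-1:ℝ) 0, U' ρ = w := by
      have hae := Measure.ae_ae_of_ae_prod hdot0
      have hae2 : ∀ᵐ ρ ∂μ1, U' ρ = w := by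
        filter_upwards [hae] with ρ hρ
        have hcontd : Continuous fun θ => (U' ρ - w) ⬝ᵥ er θ := by
          simp only [dot_expand]; fun_prop
        rw [hμ2] at hρ
        have hz := eq_zero_of_ae_zero hcontd.continuousOn hρ
        exact sub_eq_zero.mp (eq_zero_of_dot_er hαβ hz)
      intro ρ hρ
      rw [hμ1] at hae2
      funext i
      have hconti : ContinuousOn (fun x => U' x i - w i) (Ioo (-1:ℝ) 0) :=
        (((continuous_apply i).comp_continuousOn hU').sub continuousOn_const).mono
          Ioo_subset_Icc_self
      have hz := eq_zero_of_ae_zero hconti (by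
        filter_upwards [hae2] with x hx
        rw [hx]; ring)
      exact sub_eq_zero.mp (hz ρ hρ)
    constructor
    · refine ⟨U (-1) + w, ?_⟩
      intro ρ hρ
      have hab : (-1:ℝ) ≤ ρ := hρ.1
      have hsub : Icc (-1:ℝ) ρ ⊆ Icc (-1:ℝ) 0 := Icc_subset_Icc le_rfl hρ.2
      have hUd : ∀ x ∈ Icc (-1:ℝ) ρ, HasDerivWithinAt U (U' x) (Icc (-1:ℝ) ρ) x :=
        fun x hx => (hU x (hsub hx)).mono hsub
      have hU'cc : ContinuousOn U' (Icc (-1:ℝ) ρ) := hU'.mono hsub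
      funext i
      have hftc := ftc_Ioo hab hUd hU'cc i
      have hconst : ∫ x in Ioo (-1:ℝ) ρ, U' x i = (ρ + 1) * w i := by
        have hcongr : ∫ x in Ioo (-1:ℝ) ρ, U' x i
            = ∫ x in Ioo (-1:ℝ) ρ, (fun _ => w i) x :=
          setIntegral_congr_fun measurableSet_Ioo (fun x hx => by
            have hxI : x ∈ Ioo (-1:ℝ) 0 := ⟨hx.1, lt_of_lt_of_le hx.2 hρ.2⟩
            rw [hU'w x hxI])
        rw [hcongr, setIntegral_const, Real.volume_real_Ioo, smul_eq_mul,
          max_eq_left (by linarith)]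
        ring
      have hval : U ρ i - U (-1) i = (ρ + 1) * w i := by rw [← hftc, hconst]
      simp only [Pi.add_apply, Pi.smul_apply, smul_eq_mul]
      linarith
    · filter_upwards [hD0, hZae] with q hDq hqZ
      have hU'q : U' q.1 = w := hU'w q.1 hqZ.1
      have hFq : odot (U' q.1) (er q.2) + odot (m q) (et q.2)
          = Ci (sg q.2 • vecMulVec (er q.2) (er q.2)) := by
        have h := hDq; rw [hDm] at h; simp only at h; exact sub_eq_zero.mp h
      rw [hU'q] at hFq
      simp only [hsg] at hFq
      have hpi := pointwise_identity hIsym q.2 w (hcne q.2)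
      have hcanc : odot (m q) (et q.2) = odot ((Mmat Ci q.2).mulVec w) (et q.2) := by
        apply add_left_cancel (a := odot w (er q.2))
        rw [hFq, hpi]
      exact odot_et_inj q.2 hcanc
  have hchar_bwd : (∃ c : V2, ∀ ρ ∈ Set.Icc (-1 : ℝ) 0, U ρ = ρ • w + c) →
      (∀ᵐ q ∂(μ1.prod μ2), m q = (Mmat Ci q.2).mulVec w) → g =ᵐ[μ1.prod μ2] 0 := by
    rintro ⟨c, hcU⟩ hmae
    have hU'c : ∀ ρ ∈ Icc (-1:ℝ) 0, U' ρ = w := by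
      intro ρ hρ
      have h1 := hU ρ hρ
      have h2 : HasDerivWithinAt U w (Icc (-1:ℝ) 0) ρ := by
        have hform : HasDerivWithinAt (fun x : ℝ => x • w + c) w (Icc (-1:ℝ) 0) ρ := by
          have h3 := ((hasDerivAt_id ρ).smul_const w).add_const c
          simpa using h3.hasDerivWithinAt
        exact hform.congr (fun x hx => hcU x hx) (hcU ρ hρ)
      exact UniqueDiffWithinAt.eq_deriv _
        ((uniqueDiffOn_Icc (by norm_num : (-1:ℝ) < 0)) ρ hρ) h1 h2
    filter_upwards [hmae, hZae] with q hmq hqZ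
    show g q = 0
    have hDq : Dm q = 0 := by
      rw [hDm]; simp only
      rw [sub_eq_zero, hU'c q.1 (Ioo_subset_Icc_self hqZ.1), hmq]
      have hpi := pointwise_identity hIsym q.2 w (hcne q.2)
      simp only [hsg]
      exact hpi
    rw [hg]; simp only
    rw [hDq, map_zero, fip_zero_left]
    simp
  -- assembly
  rw [hmeasrw]
  have hgint : 0 ≤ ∫ q, g q ∂(μ1.prod μ2) := integral_nonneg hgnn
  constructor
  · linarith [hmaster]
  · constructor
    · intro heq
      have hg0 : ∫ q, g q ∂(μ1.prod μ2) = 0 := by linarith [hmaster]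
      have hg0ae := (integral_eq_zero_iff_of_nonneg_ae
        (Filter.Eventually.of_forall hgnn) hIg).mp hg0
      exact hchar_fwd hg0ae
    · rintro ⟨hc, hmae⟩
      have hg0ae := hchar_bwd hc hmae
      have hg0 : ∫ q, g q ∂(μ1.prod μ2) = 0 := by
        rw [integral_congr_ae hg0ae]; simp
      linarith [hmaster]
end
end
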